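/- Conversely, if the sequence S(F,y) admits an annihilating polynomial m(X) that is monic with nonzero constant term, and N is the order of m, then S(F,y) is periodic with period N: F^[k+N] y = F^[k] y for all k ≥ 0. If moreover m is the minimal polynomial of S(F,y), then N is the least period of S(F,y). -/

import Mathlib

/-- A nonzero polynomial `p` over `ZMod 2` is an annihilating (characteristic) polynomial
of the sequence `S(F,y) = (F^[k] y)ₖ` if for every `k ≥ 0`,
`∑_{i=0}^{deg p} (coeff of Xⁱ in p) • F^[k+i] y = 0`. -/
def IsAnnihilating (n : ℕ) (F : (Fin n → ZMod 2) → (Fin n → ZMod 2))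
    (y : Fin n → ZMod 2) (p : Polynomial (ZMod 2)) : Prop :=
  p ≠ 0 ∧ ∀ k : ℕ, ∑ i ∈ Finset.range (p.natDegree + 1), p.coeff i • F^[k + i] y = 0

/-! A polynomial annihilates a sequence exactly when it kills the sequence as a polynomial in the
shift operator `E = seqShift`, so the annihilators of `S(F,y)` form an ideal, and `X ^ N - 1` lies in it
exactly when `N` is a period. Hence `μ ∣ X ^ N - 1` makes `N` a period. Conversely, if `μ` has
least degree, it divides every annihilator (the remainder of division by `μ` annihilates and has
smaller degree), in particular `X ^ N' - 1` for every period `N'`, so `N ≤ N'` since `N` is the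
order of `μ`. -/

open Polynomial

section ShiftOperator

variable {R M : Type*} [CommRing R] [AddCommGroup M] [Module R M]

variable (R M) in
abbrev seqShift : Module.End R (ℕ → M) :=
  LinearMap.funLeft R M Nat.succ

theorem seqShift_pow_apply (i : ℕ) (s : ℕ → M) (k : ℕ) :
    (seqShift R M ^ i) s k = s (k + i) := by
  induction i generalizing k with
  | zero => rfl
  | succ i ih =>
    rw [pow_succ', Module.End.mul_apply, LinearMap.funLeft_apply, ih, Nat.succ_add,
      ← Nat.add_succ]

theorem aeval_seqShift_apply (p : R[X]) (s : ℕ → M) (k : ℕ) :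
    aeval (seqShift R M) p s k =
      ∑ i ∈ Finset.range (p.natDegree + 1), p.coeff i • s (k + i) := by
  rw [aeval_endomorphism,
    sum_over_range (f := fun i a => a • (seqShift R M ^ i) s) p (fun _ => zero_smul R _)]
  simp only [Finset.sum_apply, Pi.smul_apply, seqShift_pow_apply]

theorem aeval_seqShift_X_pow_sub_one_eq_zero_iff (N : ℕ) (s : ℕ → M) :
    aeval (seqShift R M) (X ^ N - 1 : R[X]) s = 0 ↔ Function.Periodic s N := by
  simp only [funext_iff, map_sub, map_pow, aeval_X, map_one, LinearMap.sub_apply,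
    seqShift_pow_apply, Module.End.one_apply, sub_eq_zero]
  rfl

theorem aeval_seqShift_eq_zero_of_dvd {p q : R[X]} {s : ℕ → M} (hpq : p ∣ q)
    (hp : aeval (seqShift R M) p s = 0) : aeval (seqShift R M) q s = 0 := by
  obtain ⟨c, rfl⟩ := hpq
  rw [mul_comm, map_mul, Module.End.mul_apply, hp, map_zero]

theorem aeval_seqShift_modByMonic_eq_zero {p q : R[X]} {s : ℕ → M}
    (hps : aeval (seqShift R M) p s = 0) (hqs : aeval (seqShift R M) q s = 0) :
    aeval (seqShift R M) (q %ₘ p) s = 0 := by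
  rw [modByMonic_eq_sub_mul_div q p, map_sub, LinearMap.sub_apply, hqs,
    aeval_seqShift_eq_zero_of_dvd (dvd_mul_right p _) hps, sub_zero]

theorem dvd_of_aeval_seqShift_eq_zero [Nontrivial R] {p q : R[X]} {s : ℕ → M} (hp : p.Monic)
    (hps : aeval (seqShift R M) p s = 0)
    (hmin : ∀ r : R[X], r ≠ 0 → aeval (seqShift R M) r s = 0 → p.natDegree ≤ r.natDegree)
    (hqs : aeval (seqShift R M) q s = 0) : p ∣ q := by
  rw [← modByMonic_eq_zero_iff_dvd hp]
  by_contra hr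
  have hlt : (q %ₘ p).natDegree < p.natDegree :=
    natDegree_lt_natDegree hr (degree_modByMonic_lt q hp)
  exact hlt.not_ge (hmin _ hr (aeval_seqShift_modByMonic_eq_zero hps hqs))

end ShiftOperator

theorem isAnnihilating_iff_aeval_seqShift {n : ℕ} {F : (Fin n → ZMod 2) → (Fin n → ZMod 2)}
    {y : Fin n → ZMod 2} {p : (ZMod 2)[X]} :
    IsAnnihilating n F y p ↔
      p ≠ 0 ∧ aeval (seqShift (ZMod 2) _) p (fun k => F^[k] y) = 0 := by
  simp only [IsAnnihilating, funext_iff, aeval_seqShift_apply, Pi.zero_apply]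

theorem periodic_of_annihilating_with_nonzero_constant_general (n : ℕ)
    (F : (Fin n → ZMod 2) → (Fin n → ZMod 2)) (y : Fin n → ZMod 2)
    (μ : Polynomial (ZMod 2)) (hmonic : μ.Monic) (hann : IsAnnihilating n F y μ)
    (N : ℕ) (hdvd : μ ∣ (Polynomial.X ^ N - 1 : Polynomial (ZMod 2)))
    (hord : ∀ T : ℕ, 1 ≤ T → μ ∣ (Polynomial.X ^ T - 1 : Polynomial (ZMod 2)) → N ≤ T) :
    (∀ k : ℕ, F^[k + N] y = F^[k] y) ∧
    ((∀ p : Polynomial (ZMod 2), IsAnnihilating n F y p → μ.natDegree ≤ p.natDegree) →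
      ∀ N' : ℕ, 1 ≤ N' → (∀ k : ℕ, F^[k + N'] y = F^[k] y) → N ≤ N') := by
  set s : ℕ → (Fin n → ZMod 2) := fun k => F^[k] y
  have hμ : aeval (seqShift (ZMod 2) _) μ s = 0 := (isAnnihilating_iff_aeval_seqShift.mp hann).2
  refine ⟨(aeval_seqShift_X_pow_sub_one_eq_zero_iff N s).mp
    (aeval_seqShift_eq_zero_of_dvd hdvd hμ), fun hmin N' hN' hper => hord N' hN' ?_⟩
  have hper' := (aeval_seqShift_X_pow_sub_one_eq_zero_iff (R := ZMod 2) N' s).mpr hper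
  refine dvd_of_aeval_seqShift_eq_zero hmonic hμ (fun r hr hrs => ?_) hper'
  exact hmin r (isAnnihilating_iff_aeval_seqShift.mpr ⟨hr, hrs⟩)

/-- If `S(F,y)` admits an annihilating polynomial `μ` that is monic with
nonzero constant term, and `N` is the order of `μ`, then `S(F,y)` is periodic with period
`N`. If moreover `μ` is the minimal polynomial of `S(F,y)`, then `N` is its least period. -/
theorem periodic_of_annihilating_with_nonzero_constant (n : ℕ) (hn : 0 < n)
    (F : (Fin n → ZMod 2) → (Fin n → ZMod 2)) (y : Fin n → ZMod 2)
    (μ : Polynomial (ZMod 2)) (hmonic : μ.Monic) (hann : IsAnnihilating n F y μ)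
    (hconst : μ.coeff 0 ≠ 0)
    (N : ℕ) (hN : 1 ≤ N) (hdvd : μ ∣ (Polynomial.X ^ N - 1 : Polynomial (ZMod 2)))
    (hord : ∀ T : ℕ, 1 ≤ T → μ ∣ (Polynomial.X ^ T - 1 : Polynomial (ZMod 2)) → N ≤ T) :
    (∀ k : ℕ, F^[k + N] y = F^[k] y) ∧
    ((∀ p : Polynomial (ZMod 2), IsAnnihilating n F y p → μ.natDegree ≤ p.natDegree) →
      ∀ N' : ℕ, 1 ≤ N' → (∀ k : ℕ, F^[k + N'] y = F^[k] y) → N ≤ N') :=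
  periodic_of_annihilating_with_nonzero_constant_general n F y μ hmonic hann N hdvd hord
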